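/- arXiv:math/9907099 — 5 statements merged into one kernel-verified Lean document; each statement's English description precedes it below -/
import Mathlib

section
/- Let r(a,b,c) be the general skew-symmetric element of S⊗S. If the 15 parameters satisfy the 19 Schrödinger bialgebra equations, then the Schouten bracket of r(a,b,c) equals [[r,r]] = (a3*a6 + b3*b6 - a3*b1 - a1*b3 - c2^2) K∧M∧P. -/
/-!
Because `r` is skew-symmetric, `[[r,r]]` lies in `Λ³S`, which is spanned by the twenty trivectors
`X_i ∧ X_j ∧ X_k` with `i < j < k`. Expanding `[[r,r]]` in the basis with the structure constants,
its coordinate along every such trivector except `K ∧ M ∧ P` is, up to sign, the left-hand side of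
one of the 19 Schrödinger bialgebra equations, so only the `K ∧ M ∧ P` component survives.
-/

open TensorProduct

noncomputable section

variable (L : Type) [LieRing L] [LieAlgebra ℝ L]

/-- The wedge X∧Y = X⊗Y - Y⊗X in S⊗S. -/
def wedge (X Y : L) : L ⊗[ℝ] L := X ⊗ₜ[ℝ] Y - Y ⊗ₜ[ℝ] X

/-- The adjoint action of X on S⊗S: X·r = (ad_X⊗id + id⊗ad_X)(r). -/
def act (X : L) : (L ⊗[ℝ] L) →ₗ[ℝ] (L ⊗[ℝ] L) :=
  LinearMap.rTensor L (LieAlgebra.ad ℝ L X) + LinearMap.lTensor L (LieAlgebra.ad ℝ L X)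

/-- S∧S: the span of wedges, i.e. the skew-symmetric part of S⊗S. -/
def skewPart : Submodule ℝ (L ⊗[ℝ] L) :=
  Submodule.span ℝ {w | ∃ X Y : L, w = wedge L X Y}

/-- 1-cocycle condition. -/
def IsCocycle (δ : L → L ⊗[ℝ] L) : Prop :=
  ∀ X Y : L, δ ⁅X, Y⁆ = act L X (δ Y) - act L Y (δ X)

/-- The coboundary cocommutator δ_r(X) = X·r, as a linear map. -/
def cobdry (r : L ⊗[ℝ] L) : L →ₗ[ℝ] L ⊗[ℝ] L where
  toFun X := act L X r
  map_add' X Y := by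
    have h : LieAlgebra.ad ℝ L (X + Y) = LieAlgebra.ad ℝ L X + LieAlgebra.ad ℝ L Y :=
      map_add _ _ _
    simp only [act, h, LinearMap.rTensor_add, LinearMap.lTensor_add, LinearMap.add_apply]
    abel
  map_smul' c X := by
    have h : LieAlgebra.ad ℝ L (c • X) = c • LieAlgebra.ad ℝ L X := map_smul _ _ _
    simp only [act, h, LinearMap.rTensor_smul, LinearMap.lTensor_smul, LinearMap.add_apply,
      LinearMap.smul_apply, RingHom.id_apply, smul_add]

/-- The cyclic permutation ζ : x⊗y⊗z ↦ z⊗x⊗y on (S⊗S)⊗S. -/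
def zeta : ((L ⊗[ℝ] L) ⊗[ℝ] L) →ₗ[ℝ] ((L ⊗[ℝ] L) ⊗[ℝ] L) :=
  ((TensorProduct.assoc ℝ L L L).symm.toLinearMap).comp
    ((TensorProduct.comm ℝ (L ⊗[ℝ] L) L).toLinearMap)

/-- The co-Jacobi identity for a linear map δ : S → S⊗S. -/
def CoJacobi (δ : L →ₗ[ℝ] L ⊗[ℝ] L) : Prop :=
  ∀ X : L,
    ((LinearMap.id : ((L ⊗[ℝ] L) ⊗[ℝ] L) →ₗ[ℝ] ((L ⊗[ℝ] L) ⊗[ℝ] L)) + zeta L +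
      zeta L ∘ₗ zeta L) (LinearMap.rTensor L δ (δ X)) = 0

/-- A Lie bialgebra cocommutator: skew-symmetric-valued 1-cocycle satisfying co-Jacobi. -/
def IsBialgCocomm (δ : L →ₗ[ℝ] L ⊗[ℝ] L) : Prop :=
  (∀ X : L, δ X ∈ skewPart L) ∧ IsCocycle L ⇑δ ∧ CoJacobi L δ

/-- The general 15-parameter skew-symmetric element r(a,b,c) of S⊗S. -/
def rGen (D H P K C M : L) (a1 a2 a3 a4 a5 a6 b1 b2 b3 b4 b5 b6 c1 c2 c3 : ℝ) :
    L ⊗[ℝ] L :=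
  a1 • wedge L D P + a2 • wedge L D H + a3 • wedge L P M + a4 • wedge L H M +
    a5 • wedge L P H + a6 • wedge L P C + b1 • wedge L D K + b2 • wedge L D C +
    b3 • wedge L K M + b4 • wedge L C M + b5 • wedge L K C + b6 • wedge L K H +
    c1 • wedge L D M + c2 • wedge L P K + c3 • wedge L H C

/-- The 19 Schrödinger bialgebra equations. -/
def Eqs19 (a1 a2 a3 a4 a5 a6 b1 b2 b3 b4 b5 b6 c1 c2 c3 : ℝ) : Prop :=
  a6^2 + a6*b1 - 3*a1*b5 + b5*b6 = 0 ∧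
  a2*a3 - 2*a1*a4 - a4*b6 - 3*a5*c1 + a5*c2 = 0 ∧
  a1*a2 + a2*b6 - a5*c3 = 0 ∧
  a5*b1 - a1*b6 - 2*a2*c1 - a4*c3 = 0 ∧
  a4*a6 + a4*b1 - a2*b3 - a5*b4 + a1*c1 - a1*c2 = 0 ∧
  3*a1*b2 - a2*b5 + a6*c3 + b1*c3 = 0 ∧
  a3*b2 + 2*a1*b4 - a4*b5 + a6*c1 + a6*c2 + b3*c3 = 0 ∧
  3*a2*b5 + b2*b6 - a6*c3 = 0 ∧
  b6^2 + b6*a1 - 3*b1*a5 + a5*a6 = 0 ∧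
  b2*b3 - 2*b1*b4 - b4*a6 - 3*b5*c1 - b5*c2 = 0 ∧
  b1*b2 + b2*a6 + b5*c3 = 0 ∧
  b5*a1 - b1*a6 - 2*b2*c1 + b4*c3 = 0 ∧
  b4*b6 + b4*a1 - b2*a3 - b5*a4 + b1*c1 + b1*c2 = 0 ∧
  3*b1*a2 - b2*a5 - b6*c3 - a1*c3 = 0 ∧
  b3*a2 + 2*b1*a4 - b4*a5 + b6*c1 - b6*c2 - a3*c3 = 0 ∧
  3*b2*a5 + a2*a6 + b6*c3 = 0 ∧
  4*a2*b2 + c3^2 = 0 ∧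
  2*a4*b2 + 2*a2*b4 + a5*b5 - a6*b6 = 0 ∧
  2*a1*b1 - a1*a6 - b1*b6 + a5*b5 - a6*b6 = 0

/-- Full antisymmetrization X∧Y∧Z in (S⊗S)⊗S. -/
def wedge3 (X Y Z : L) : (L ⊗[ℝ] L) ⊗[ℝ] L :=
  (X ⊗ₜ[ℝ] Y) ⊗ₜ[ℝ] Z - (X ⊗ₜ[ℝ] Z) ⊗ₜ[ℝ] Y - (Y ⊗ₜ[ℝ] X) ⊗ₜ[ℝ] Z +
    (Y ⊗ₜ[ℝ] Z) ⊗ₜ[ℝ] X + (Z ⊗ₜ[ℝ] X) ⊗ₜ[ℝ] Y - (Z ⊗ₜ[ℝ] Y) ⊗ₜ[ℝ] X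

/-- The Schouten bracket [[r,r]], written in coordinates w.r.t. a basis. -/
def schouten (B : Module.Basis (Fin 6) ℝ L) (r : L ⊗[ℝ] L) : (L ⊗[ℝ] L) ⊗[ℝ] L :=
  ∑ i : Fin 6, ∑ j : Fin 6, ∑ k : Fin 6, ∑ l : Fin 6,
    (((B.tensorProduct B).repr r (i, j)) * ((B.tensorProduct B).repr r (k, l))) •
      ((⁅B i, B k⁆ ⊗ₜ[ℝ] B j) ⊗ₜ[ℝ] B l + (B i ⊗ₜ[ℝ] ⁅B j, B k⁆) ⊗ₜ[ℝ] B l +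
        (B i ⊗ₜ[ℝ] B k) ⊗ₜ[ℝ] ⁅B j, B l⁆)

/-- The adjoint-invariant elements of S⊗S. -/
def invariants : Submodule ℝ (L ⊗[ℝ] L) where
  carrier := {η | ∀ X : L, act L X η = 0}
  add_mem' := by
    intro a b ha hb X
    simp [map_add, ha X, hb X]
  zero_mem' := by intro X; simp
  smul_mem' := by
    intro c a ha X
    simp [map_smul, ha X]

/-- The space of skew-symmetric-valued 1-cocycles on S. -/
def cocycleSpace : Submodule ℝ (L →ₗ[ℝ] (L ⊗[ℝ] L)) where
  carrier := {δ | (∀ X : L, δ X ∈ skewPart L) ∧ IsCocycle L ⇑δ}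
  add_mem' := by
    rintro a b ⟨ha1, ha2⟩ ⟨hb1, hb2⟩
    refine ⟨fun X => add_mem (ha1 X) (hb1 X), fun X Y => ?_⟩
    simp only [LinearMap.add_apply, ha2 X Y, hb2 X Y, map_add]
    abel
  zero_mem' := by
    refine ⟨fun X => zero_mem _, fun X Y => ?_⟩
    simp
  smul_mem' := by
    rintro c a ⟨ha1, ha2⟩
    refine ⟨fun X => Submodule.smul_mem _ c (ha1 X), fun X Y => ?_⟩
    simp only [LinearMap.smul_apply, ha2 X Y, map_smul, smul_sub]

end

namespace Module.Basis

variable {R M ι : Type*} [CommRing R] [AddCommGroup M] [Module R M]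

theorem tensorProduct_repr_tmul_sub_tmul (B : Basis ι R M) (i j : ι) :
    (B.tensorProduct B).repr (B i ⊗ₜ[R] B j - B j ⊗ₜ[R] B i) =
      Finsupp.single (i, j) 1 - Finsupp.single (j, i) 1 := by
  simp [← tensorProduct_apply]

end Module.Basis

section Schrodinger

variable {L : Type} [LieRing L] [LieAlgebra ℝ L]

def rGenMatrix (a1 a2 a3 a4 a5 a6 b1 b2 b3 b4 b5 b6 c1 c2 c3 : ℝ) : Matrix (Fin 6) (Fin 6) ℝ :=
  !![  0,  a2,  a1,  b1,  b2, c1;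
     -a2,   0, -a5, -b6,  c3, a4;
     -a1,  a5,   0,  c2,  a6, a3;
     -b1,  b6, -c2,   0,  b5, b3;
     -b2, -c3, -a6, -b5,   0, b4;
     -c1, -a4, -a3, -b3, -b4,  0]

theorem tensorProduct_repr_rGen (B : Module.Basis (Fin 6) ℝ L)
    (a1 a2 a3 a4 a5 a6 b1 b2 b3 b4 b5 b6 c1 c2 c3 : ℝ) (i j : Fin 6) :
    (B.tensorProduct B).repr
        (rGen L (B 0) (B 1) (B 2) (B 3) (B 4) (B 5) a1 a2 a3 a4 a5 a6 b1 b2 b3 b4 b5 b6 c1 c2 c3)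
        (i, j) =
      rGenMatrix a1 a2 a3 a4 a5 a6 b1 b2 b3 b4 b5 b6 c1 c2 c3 i j := by
  simp only [rGen, wedge, map_add, map_smul, B.tensorProduct_repr_tmul_sub_tmul, Finsupp.coe_add,
    Finsupp.coe_smul, Pi.add_apply, Pi.smul_apply, Finsupp.coe_sub, Pi.sub_apply, smul_eq_mul,
    Finsupp.single_apply, Prod.ext_iff]
  fin_cases i <;> fin_cases j <;> simp [rGenMatrix]

set_option maxHeartbeats 1000000 in
theorem schouten_rGen (D H P K C M : L) (B : Module.Basis (Fin 6) ℝ L)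
    (hB : ⇑B = ![D, H, P, K, C, M])
    (hDP : ⁅D, P⁆ = -P) (hDK : ⁅D, K⁆ = K) (hKP : ⁅K, P⁆ = M)
    (hDH : ⁅D, H⁆ = (-2 : ℝ) • H) (hDC : ⁅D, C⁆ = (2 : ℝ) • C) (hHC : ⁅H, C⁆ = D)
    (hKH : ⁅K, H⁆ = P) (hPC : ⁅P, C⁆ = -K) (hKC : ⁅K, C⁆ = 0) (hPH : ⁅P, H⁆ = 0)
    (hM : ∀ X : L, ⁅M, X⁆ = 0) (a1 a2 a3 a4 a5 a6 b1 b2 b3 b4 b5 b6 c1 c2 c3 : ℝ) :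
    schouten L B (rGen L D H P K C M a1 a2 a3 a4 a5 a6 b1 b2 b3 b4 b5 b6 c1 c2 c3) =
      (a1*a2 + a2*b6 - a5*c3) • wedge3 L D H P +
      (3*b1*a2 - b2*a5 - b6*c3 - a1*c3) • wedge3 L D H K +
      (4*a2*b2 + c3^2) • wedge3 L D H C -
      (a5*b1 - a1*b6 - 2*a2*c1 - a4*c3) • wedge3 L D H M +
      (2*a1*b1 - a1*a6 - b1*b6 + a5*b5 - a6*b6) • wedge3 L D P K +
      (3*a1*b2 - a2*b5 + a6*c3 + b1*c3) • wedge3 L D P C +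
      (a4*a6 + a4*b1 - a2*b3 - a5*b4 + a1*c1 - a1*c2) • wedge3 L D P M +
      (b1*b2 + b2*a6 + b5*c3) • wedge3 L D K C -
      (b4*b6 + b4*a1 - b2*a3 - b5*a4 + b1*c1 + b1*c2) • wedge3 L D K M +
      (b5*a1 - b1*a6 - 2*b2*c1 + b4*c3) • wedge3 L D C M +
      (b6^2 + b6*a1 - 3*b1*a5 + a5*a6) • wedge3 L H P K -
      (3*b2*a5 + a2*a6 + b6*c3) • wedge3 L H P C +
      (a2*a3 - 2*a1*a4 - a4*b6 - 3*a5*c1 + a5*c2) • wedge3 L H P M -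
      (3*a2*b5 + b2*b6 - a6*c3) • wedge3 L H K C -
      (b3*a2 + 2*b1*a4 - b4*a5 + b6*c1 - b6*c2 - a3*c3) • wedge3 L H K M -
      (2*a4*b2 + 2*a2*b4 + a5*b5 - a6*b6) • wedge3 L H C M +
      (a6^2 + a6*b1 - 3*a1*b5 + b5*b6) • wedge3 L P K C -
      (a3*b2 + 2*a1*b4 - a4*b5 + a6*c1 + a6*c2 + b3*c3) • wedge3 L P C M +
      (b2*b3 - 2*b1*b4 - b4*a6 - 3*b5*c1 - b5*c2) • wedge3 L K C M +
      (a3*a6 + b3*b6 - a3*b1 - a1*b3 - c2^2) • wedge3 L K M P := by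
  obtain ⟨rfl, rfl, rfl, rfl, rfl, rfl⟩ :
      B 0 = D ∧ B 1 = H ∧ B 2 = P ∧ B 3 = K ∧ B 4 = C ∧ B 5 = M := by
    simp [hB]
  have hM' (X : L) : ⁅X, B 5⁆ = 0 := by rw [← lie_skew, hM, neg_zero]
  simp only [schouten, tensorProduct_repr_rGen, Fin.sum_univ_six]
  simp only [rGenMatrix, Matrix.of_apply, Matrix.cons_val', Matrix.cons_val_zero,
    Matrix.cons_val_one, Matrix.cons_val, Matrix.empty_val', Matrix.cons_val_fin_one, zero_mul,
    mul_zero, zero_smul, zero_add, add_zero]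
  have swap {X Y Z : L} (h : ⁅X, Y⁆ = Z) : ⁅Y, X⁆ = -Z := by rw [← lie_skew, h]
  simp only [hDP, hDK, hKP, hDH, hDC, hHC, hKH, hPC, hKC, hPH, swap hDP, swap hDK, swap hKP,
    swap hDH, swap hDC, swap hHC, swap hKH, swap hPC, swap hKC, swap hPH, hM, hM', lie_self]
  simp only [wedge3, neg_zero, neg_neg, smul_neg, neg_tmul, tmul_neg, tmul_smul, ← smul_tmul',
    smul_zero, zero_tmul, tmul_zero, smul_add, smul_sub, smul_smul, add_zero, zero_add]
  match_scalars <;> ring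

end Schrodinger

theorem statement2 (L : Type) [LieRing L] [LieAlgebra ℝ L]
    (D H P K C M : L) (B : Module.Basis (Fin 6) ℝ L)
    (hB : ⇑B = ![D, H, P, K, C, M])
    (hDP : ⁅D, P⁆ = -P) (hDK : ⁅D, K⁆ = K) (hKP : ⁅K, P⁆ = M)
    (hDH : ⁅D, H⁆ = (-2 : ℝ) • H) (hDC : ⁅D, C⁆ = (2 : ℝ) • C) (hHC : ⁅H, C⁆ = D)
    (hKH : ⁅K, H⁆ = P) (hPC : ⁅P, C⁆ = -K) (hKC : ⁅K, C⁆ = 0) (hPH : ⁅P, H⁆ = 0)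
    (hM : ∀ X : L, ⁅M, X⁆ = 0)
    (a1 a2 a3 a4 a5 a6 b1 b2 b3 b4 b5 b6 c1 c2 c3 : ℝ) (heq : Eqs19 a1 a2 a3 a4 a5 a6 b1 b2 b3 b4 b5 b6 c1 c2 c3) :
    schouten L B (rGen L D H P K C M a1 a2 a3 a4 a5 a6 b1 b2 b3 b4 b5 b6 c1 c2 c3) =
      (a3*a6 + b3*b6 - a3*b1 - a1*b3 - c2^2) • wedge3 L K M P := by
  obtain ⟨e1, e2, e3, e4, e5, e6, e7, e8, e9, e10, e11, e12, e13, e14, e15, e16, e17, e18, e19⟩ :=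
    heq
  rw [schouten_rGen D H P K C M B hB hDP hDK hKP hDH hDC hHC hKH hPC hKC hPH hM]
  simp only [e1, e2, e3, e4, e5, e6, e7, e8, e9, e10, e11, e12, e13, e14, e15, e16, e17, e18, e19,
    zero_smul, zero_add, sub_zero, add_zero]
end

section
/- The element K∧M∧P of S⊗S⊗S is invariant under the adjoint action: for every X ∈ S, (ad_X ⊗ id ⊗ id + id ⊗ ad_X ⊗ id + id ⊗ id ⊗ ad_X)(K∧M∧P) = 0. -/
open TensorProduct

/-! The operator in the statement is the action of `X` on the tensor-product Lie module
`(S ⊗ S) ⊗ S`, so it acts on `K ∧ M ∧ P` by the Leibniz rule. As `M` is central this gives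
`[X, K] ∧ M ∧ P + K ∧ M ∧ [X, P]`, which vanishes for every basis vector `X`: `ad X` preserves
`span {K, M, P}` and is traceless on it. The action is linear in `X`, so it vanishes for all `X`. -/

open LieModule

theorem LieModule.lie_eq_zero_of_basis {ι R L M : Type*} [CommRing R] [LieRing L]
    [LieAlgebra R L] [AddCommGroup M] [Module R M] [LieRingModule L M] [LieModule R L M]
    (B : Module.Basis ι R L) {m : M} (h : ∀ i, ⁅B i, m⁆ = 0) (x : L) : ⁅x, m⁆ = 0 :=
  LinearMap.congr_fun
    (B.ext (f₁ := (toEnd R L M : L →ₗ[R] Module.End R M).flip m) (f₂ := 0) h) x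

section Wedge3

variable {L : Type} [LieRing L] [LieAlgebra ℝ L]

theorem rTensor_act_add_lTensor_ad_apply (X : L) (t : (L ⊗[ℝ] L) ⊗[ℝ] L) :
    (LinearMap.rTensor L (act L X) + LinearMap.lTensor (L ⊗[ℝ] L) (LieAlgebra.ad ℝ L X)) t =
      ⁅X, t⁆ :=
  rfl

theorem lie_wedge3 (X A B C : L) :
    ⁅X, wedge3 L A B C⁆ = wedge3 L ⁅X, A⁆ B C + wedge3 L A ⁅X, B⁆ C + wedge3 L A B ⁅X, C⁆ := by
  simp only [wedge3, lie_sub, lie_add, lie_tmul_right, add_tmul]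
  abel

@[simp]
theorem wedge3_zero_left (B C : L) : wedge3 L 0 B C = 0 := by
  simp [wedge3]

@[simp]
theorem wedge3_zero_middle (A C : L) : wedge3 L A 0 C = 0 := by
  simp [wedge3]

@[simp]
theorem wedge3_zero_right (A B : L) : wedge3 L A B 0 = 0 := by
  simp [wedge3]

@[simp]
theorem wedge3_neg_left (A B C : L) : wedge3 L (-A) B C = -wedge3 L A B C := by
  simp only [wedge3, tmul_neg, neg_tmul]
  abel

@[simp]
theorem wedge3_neg_right (A B C : L) : wedge3 L A B (-C) = -wedge3 L A B C := by
  simp only [wedge3, tmul_neg, neg_tmul]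
  abel

@[simp]
theorem wedge3_self_left (A C : L) : wedge3 L A A C = 0 := by
  simp only [wedge3]
  abel

@[simp]
theorem wedge3_self_right (A B : L) : wedge3 L A B B = 0 := by
  simp only [wedge3]
  abel

@[simp]
theorem wedge3_self_outer (A B : L) : wedge3 L A B A = 0 := by
  simp only [wedge3]
  abel

theorem lie_wedge3_of_central (X A C : L) {Z : L} (hZ : ∀ Y : L, ⁅Z, Y⁆ = 0) :
    ⁅X, wedge3 L A Z C⁆ = wedge3 L ⁅X, A⁆ Z C + wedge3 L A Z ⁅X, C⁆ := by
  rw [lie_wedge3, ← lie_skew X Z, hZ, neg_zero, wedge3_zero_middle, add_zero]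

end Wedge3

theorem statement4_general (L : Type) [LieRing L] [LieAlgebra ℝ L]
    (D H P K C M : L) (B : Module.Basis (Fin 6) ℝ L)
    (hB : ⇑B = ![D, H, P, K, C, M])
    (hDP : ⁅D, P⁆ = -P) (hDK : ⁅D, K⁆ = K) (hKP : ⁅K, P⁆ = M)
    (hKH : ⁅K, H⁆ = P) (hPC : ⁅P, C⁆ = -K) (hKC : ⁅K, C⁆ = 0) (hPH : ⁅P, H⁆ = 0)
    (hM : ∀ X : L, ⁅M, X⁆ = 0) :
    ∀ X : L,
      (LinearMap.rTensor L (act L X) +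
        LinearMap.lTensor (L ⊗[ℝ] L) (LieAlgebra.ad ℝ L X)) (wedge3 L K M P) = 0 := by
  intro X
  rw [rTensor_act_add_lTensor_ad_apply]
  refine lie_eq_zero_of_basis B (fun i => ?_) X
  have hHK : ⁅H, K⁆ = -P := by rw [← lie_skew, hKH]
  have hHP : ⁅H, P⁆ = 0 := by rw [← lie_skew, hPH, neg_zero]
  have hPK : ⁅P, K⁆ = -M := by rw [← lie_skew, hKP]
  have hCK : ⁅C, K⁆ = 0 := by rw [← lie_skew, hKC, neg_zero]
  have hCP : ⁅C, P⁆ = K := by rw [← lie_skew, hPC, neg_neg]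
  rw [lie_wedge3_of_central _ _ _ hM, hB]
  fin_cases i <;> simp [hDK, hDP, hHK, hHP, hPK, hKP, hCK, hCP, hM]

theorem statement4 (L : Type) [LieRing L] [LieAlgebra ℝ L]
    (D H P K C M : L) (B : Module.Basis (Fin 6) ℝ L)
    (hB : ⇑B = ![D, H, P, K, C, M])
    (hDP : ⁅D, P⁆ = -P) (hDK : ⁅D, K⁆ = K) (hKP : ⁅K, P⁆ = M)
    (hDH : ⁅D, H⁆ = (-2 : ℝ) • H) (hDC : ⁅D, C⁆ = (2 : ℝ) • C) (hHC : ⁅H, C⁆ = D)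
    (hKH : ⁅K, H⁆ = P) (hPC : ⁅P, C⁆ = -K) (hKC : ⁅K, C⁆ = 0) (hPH : ⁅P, H⁆ = 0)
    (hM : ∀ X : L, ⁅M, X⁆ = 0) :
    ∀ X : L,
      (LinearMap.rTensor L (act L X) +
        LinearMap.lTensor (L ⊗[ℝ] L) (LieAlgebra.ad ℝ L X)) (wedge3 L K M P) = 0 :=
  statement4_general L D H P K C M B hB hDP hDK hKP hKH hPC hKC hPH hM
end

section
/- The space of adjoint-invariant elements of S⊗S, namely {η ∈ S⊗S : X·η = 0 for all X ∈ S}, is one-dimensional and spanned by M⊗M. -/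
open TensorProduct

/-!
In coordinates with respect to a basis `B`, the action of `X` sends a coefficient matrix `c` to
`A c + c Aᵀ`, where `A` is the matrix of `ad X`. Since `ad D` is diagonal on the basis
`D, H, P, K, C, M` with weights `0, -2, -1, 1, 2, 0`, an invariant tensor has coefficients only on
the eight basis tensors of weight zero: `D⊗D, D⊗M, M⊗D, M⊗M, H⊗C, C⊗H, P⊗K, K⊗P`. Reading off a
few coordinates of `K·η = 0` and `H·η = 0` kills all of them but `M⊗M`, which is invariant because
`M` is central.
-/

theorem Module.Basis.mem_span_singleton_of_repr_eq_zero {R M ι : Type*} [Semiring R]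
    [AddCommMonoid M] [Module R M] (b : Module.Basis ι R M) {x : M} {i : ι}
    (h : ∀ j ≠ i, b.repr x j = 0) : x ∈ R ∙ b i := by
  classical
  rw [Submodule.mem_span_singleton]
  refine ⟨b.repr x i, b.ext_elem fun j => ?_⟩
  rcases eq_or_ne j i with rfl | hj
  · simp
  · simp [h j hj, hj.symm]

section TensorSquare

variable {L : Type} [LieRing L] [LieAlgebra ℝ L]

theorem act_tmul (X x y : L) : act L X (x ⊗ₜ[ℝ] y) = ⁅X, x⁆ ⊗ₜ y + x ⊗ₜ ⁅X, y⁆ := rfl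

theorem tmul_mem_invariants_of_lie_eq_zero {x y : L} (hx : ∀ X : L, ⁅X, x⁆ = 0)
    (hy : ∀ X : L, ⁅X, y⁆ = 0) : x ⊗ₜ[ℝ] y ∈ invariants L := fun X => by
  rw [act_tmul, hx, hy, zero_tmul, tmul_zero, add_zero]

variable {ι : Type*} [Fintype ι] (B : Module.Basis ι ℝ L)

theorem sum_repr_lie_mul_repr (X x : L) (k : ι) :
    ∑ i, B.repr ⁅X, B i⁆ k * B.repr x i = B.repr ⁅X, x⁆ k := by
  conv_rhs => rw [← B.sum_repr x]
  simp only [lie_sum, lie_smul, map_sum, map_smul, Finsupp.finsetSum_apply, Finsupp.smul_apply,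
    smul_eq_mul, mul_comm]

theorem tensorProduct_repr_act [DecidableEq ι] (X : L) (η : L ⊗[ℝ] L) (k l : ι) :
    (B.tensorProduct B).repr (act L X η) (k, l) =
      ∑ i, B.repr ⁅X, B i⁆ k * (B.tensorProduct B).repr η (i, l) +
        ∑ j, B.repr ⁅X, B j⁆ l * (B.tensorProduct B).repr η (k, j) := by
  induction η using TensorProduct.induction_on with
  | zero => simp
  | tmul x y =>
    simp only [act_tmul, map_add, Finsupp.add_apply, Module.Basis.tensorProduct_repr_tmul_apply,
      smul_eq_mul]
    rw [← sum_repr_lie_mul_repr B X x, ← sum_repr_lie_mul_repr B X y, Finset.mul_sum,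
      Finset.sum_mul]
    congr 1 <;> exact Finset.sum_congr rfl fun _ _ => by ring
  | add η₁ η₂ h₁ h₂ =>
    simp only [map_add, Finsupp.add_apply, h₁, h₂, mul_add, Finset.sum_add_distrib]
    ring

theorem tensorProduct_repr_act_of_eigen [DecidableEq ι] {X : L} {w : ι → ℝ}
    (hX : ∀ i, ⁅X, B i⁆ = w i • B i) (η : L ⊗[ℝ] L) (k l : ι) :
    (B.tensorProduct B).repr (act L X η) (k, l) =
      (w k + w l) * (B.tensorProduct B).repr η (k, l) := by
  simp [tensorProduct_repr_act, hX, Finsupp.single_apply, add_mul]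

end TensorSquare

namespace Schrodinger

variable {L : Type} [LieRing L] [LieAlgebra ℝ L] {D H P K C M : L}
  {B : Module.Basis (Fin 6) ℝ L}

theorem repr_basis_vector (hB : ⇑B = ![D, H, P, K, C, M]) (i : Fin 6) :
    B.repr (![D, H, P, K, C, M] i) = Finsupp.single i 1 := by
  rw [← hB, B.repr_self]

theorem lie_D_basis_eq_smul (hB : ⇑B = ![D, H, P, K, C, M]) (hDP : ⁅D, P⁆ = -P)
    (hDK : ⁅D, K⁆ = K) (hDH : ⁅D, H⁆ = (-2 : ℝ) • H) (hDC : ⁅D, C⁆ = (2 : ℝ) • C)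
    (hM : ∀ X : L, ⁅M, X⁆ = 0) (i : Fin 6) :
    ⁅D, B i⁆ = (![0, -2, -1, 1, 2, 0] : Fin 6 → ℝ) i • B i := by
  have hDM : ⁅D, M⁆ = 0 := by rw [← lie_skew, hM, neg_zero]
  rw [hB]
  fin_cases i <;> simp [hDP, hDK, hDH, hDC, hDM]

theorem repr_constraints_of_act_K_eq_zero (hB : ⇑B = ![D, H, P, K, C, M]) (hDK : ⁅D, K⁆ = K)
    (hKP : ⁅K, P⁆ = M) (hKH : ⁅K, H⁆ = P) (hKC : ⁅K, C⁆ = 0) (hM : ∀ X : L, ⁅M, X⁆ = 0)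
    {η : L ⊗[ℝ] L} (hη : act L K η = 0) :
    (B.tensorProduct B).repr η (0, 0) = 0 ∧ (B.tensorProduct B).repr η (1, 4) = 0 ∧
      (B.tensorProduct B).repr η (4, 1) = 0 ∧
      (B.tensorProduct B).repr η (3, 2) = (B.tensorProduct B).repr η (0, 5) ∧
      (B.tensorProduct B).repr η (2, 3) = (B.tensorProduct B).repr η (5, 0) := by
  have hKD : ⁅K, D⁆ = -K := by rw [← lie_skew, hDK]
  have hKM : ⁅K, M⁆ = 0 := by rw [← lie_skew, hM, neg_zero]
  have rK : B.repr K = Finsupp.single 3 1 := repr_basis_vector hB 3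
  have rP : B.repr P = Finsupp.single 2 1 := repr_basis_vector hB 2
  have rM : B.repr M = Finsupp.single 5 1 := repr_basis_vector hB 5
  have h (k l : Fin 6) : (B.tensorProduct B).repr (act L K η) (k, l) = 0 := by simp [hη]
  have e30 := h 3 0
  have e24 := h 2 4
  have e42 := h 4 2
  have e35 := h 3 5
  have e53 := h 5 3
  simp only [tensorProduct_repr_act, Fin.sum_univ_six, hB] at e30 e24 e42 e35 e53
  simp [hKD, hKH, hKP, hKC, hKM, rK, rP, rM] at e30 e24 e42 e35 e53
  exact ⟨by linarith, by linarith, by linarith, by linarith, by linarith⟩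

theorem repr_constraints_of_act_H_eq_zero (hB : ⇑B = ![D, H, P, K, C, M])
    (hDH : ⁅D, H⁆ = (-2 : ℝ) • H) (hHC : ⁅H, C⁆ = D) (hKH : ⁅K, H⁆ = P) (hPH : ⁅P, H⁆ = 0)
    (hM : ∀ X : L, ⁅M, X⁆ = 0) {η : L ⊗[ℝ] L} (hη : act L H η = 0) :
    (B.tensorProduct B).repr η (0, 5) = 0 ∧ (B.tensorProduct B).repr η (5, 0) = 0 := by
  have hHD : ⁅H, D⁆ = (2 : ℝ) • H := by rw [← lie_skew, hDH, neg_smul, neg_neg]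
  have hHP : ⁅H, P⁆ = 0 := by rw [← lie_skew, hPH, neg_zero]
  have hHK : ⁅H, K⁆ = -P := by rw [← lie_skew, hKH]
  have hHM : ⁅H, M⁆ = 0 := by rw [← lie_skew, hM, neg_zero]
  have rD : B.repr D = Finsupp.single 0 1 := repr_basis_vector hB 0
  have rH : B.repr H = Finsupp.single 1 1 := repr_basis_vector hB 1
  have rP : B.repr P = Finsupp.single 2 1 := repr_basis_vector hB 2
  have h (k l : Fin 6) : (B.tensorProduct B).repr (act L H η) (k, l) = 0 := by simp [hη]
  have e15 := h 1 5
  have e51 := h 5 1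
  simp only [tensorProduct_repr_act, Fin.sum_univ_six, hB] at e15 e51
  simp [hHD, hHC, hHP, hHK, hHM, rD, rH, rP] at e15 e51
  exact ⟨e15, e51⟩

theorem repr_eq_zero_of_mem_invariants (hB : ⇑B = ![D, H, P, K, C, M])
    (hDP : ⁅D, P⁆ = -P) (hDK : ⁅D, K⁆ = K) (hKP : ⁅K, P⁆ = M)
    (hDH : ⁅D, H⁆ = (-2 : ℝ) • H) (hDC : ⁅D, C⁆ = (2 : ℝ) • C) (hHC : ⁅H, C⁆ = D)
    (hKH : ⁅K, H⁆ = P) (hKC : ⁅K, C⁆ = 0) (hPH : ⁅P, H⁆ = 0) (hM : ∀ X : L, ⁅M, X⁆ = 0)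
    {η : L ⊗[ℝ] L} (hη : η ∈ invariants L) {q : Fin 6 × Fin 6} (hq : q ≠ (5, 5)) :
    (B.tensorProduct B).repr η q = 0 := by
  obtain ⟨h00, h14, h41, h32, h23⟩ :=
    repr_constraints_of_act_K_eq_zero hB hDK hKP hKH hKC hM (hη K)
  obtain ⟨h05, h50⟩ := repr_constraints_of_act_H_eq_zero hB hDH hHC hKH hPH hM (hη H)
  obtain ⟨k, l⟩ := q
  have hD :=
    tensorProduct_repr_act_of_eigen B (lie_D_basis_eq_smul hB hDP hDK hDH hDC hM) η k l
  rw [hη D, map_zero, Finsupp.coe_zero, Pi.zero_apply, zero_eq_mul] at hD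
  fin_cases k <;> fin_cases l <;> norm_num at hD hq ⊢ <;> simp_all

end Schrodinger

theorem statement5_general (L : Type) [LieRing L] [LieAlgebra ℝ L]
    (D H P K C M : L) (B : Module.Basis (Fin 6) ℝ L)
    (hB : ⇑B = ![D, H, P, K, C, M])
    (hDP : ⁅D, P⁆ = -P) (hDK : ⁅D, K⁆ = K) (hKP : ⁅K, P⁆ = M)
    (hDH : ⁅D, H⁆ = (-2 : ℝ) • H) (hDC : ⁅D, C⁆ = (2 : ℝ) • C) (hHC : ⁅H, C⁆ = D)
    (hKH : ⁅K, H⁆ = P) (hKC : ⁅K, C⁆ = 0) (hPH : ⁅P, H⁆ = 0)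
    (hM : ∀ X : L, ⁅M, X⁆ = 0) :
    invariants L = Submodule.span ℝ {(M ⊗ₜ[ℝ] M : L ⊗[ℝ] L)} ∧
    Module.finrank ℝ ↥(invariants L) = 1 := by
  have hMM : M ⊗ₜ[ℝ] M = B.tensorProduct B (5, 5) := by simp [hB]
  have hXM (X : L) : ⁅X, M⁆ = 0 := by rw [← lie_skew, hM, neg_zero]
  have hspan : invariants L = Submodule.span ℝ {(M ⊗ₜ[ℝ] M : L ⊗[ℝ] L)} := by
    refine le_antisymm (fun η hη => ?_) ?_
    · rw [hMM]
      exact (B.tensorProduct B).mem_span_singleton_of_repr_eq_zero fun q hq =>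
        Schrodinger.repr_eq_zero_of_mem_invariants hB hDP hDK hKP hDH hDC hHC hKH hKC hPH hM
          hη hq
    · exact (Submodule.span_singleton_le_iff_mem _ _).2
        (tmul_mem_invariants_of_lie_eq_zero hXM hXM)
  refine ⟨hspan, ?_⟩
  rw [hspan, hMM]
  exact finrank_span_singleton ((B.tensorProduct B).ne_zero _)

theorem statement5 (L : Type) [LieRing L] [LieAlgebra ℝ L]
    (D H P K C M : L) (B : Module.Basis (Fin 6) ℝ L)
    (hB : ⇑B = ![D, H, P, K, C, M])
    (hDP : ⁅D, P⁆ = -P) (hDK : ⁅D, K⁆ = K) (hKP : ⁅K, P⁆ = M)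
    (hDH : ⁅D, H⁆ = (-2 : ℝ) • H) (hDC : ⁅D, C⁆ = (2 : ℝ) • C) (hHC : ⁅H, C⁆ = D)
    (hKH : ⁅K, H⁆ = P) (hPC : ⁅P, C⁆ = -K) (hKC : ⁅K, C⁆ = 0) (hPH : ⁅P, H⁆ = 0)
    (hM : ∀ X : L, ⁅M, X⁆ = 0) :
    invariants L = Submodule.span ℝ {(M ⊗ₜ[ℝ] M : L ⊗[ℝ] L)} ∧
    Module.finrank ℝ ↥(invariants L) = 1 :=
  statement5_general L D H P K C M B hB hDP hDK hKP hDH hDC hHC hKH hKC hPH hM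
end

section
/- The linear map O: S → S determined by O(D) = -D, O(P) = -K, O(K) = -P, O(M) = -M, O(H) = -C, O(C) = -H is a Lie algebra automorphism of S. Moreover, (O ⊗ O)(r(a,b,c)) = r(a',b',c') where a'_i = b_i and b'_i = a_i for i = 1,...,6, c1' = c1, c2' = -c2, c3' = -c3. -/
open TensorProduct

/-!
`O` is minus the linear involution exchanging `P ↔ K`, `H ↔ C` and fixing `D`, `M`. Checking
`O ⁅X, Y⁆ = ⁅O X, O Y⁆` on basis pairs `X < Y` of the bracket table suffices by bilinearity and
skew-symmetry, and `O ∘ O = id` gives bijectivity. On `S ∧ S` the two signs of `O ⊗ O` cancel, so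
`O ⊗ O` just relabels each wedge, exchanging the `a`- and `b`-coordinates; only `P ∧ K` and `H ∧ C`
come back reversed, which flips the signs of `c2`, `c3`.
-/

section LieBasis

variable {ι R L L' : Type*} [CommRing R] [LieRing L] [LieAlgebra R L] [LieRing L']
  [LieAlgebra R L']

theorem LinearMap.map_lie_of_basis (B : Module.Basis ι R L) (f : L →ₗ[R] L')
    (h : ∀ i j, f ⁅B i, B j⁆ = ⁅f (B i), f (B j)⁆) (x y : L) : f ⁅x, y⁆ = ⁅f x, f y⁆ := by
  have hbil : (LieModule.toEnd R L L : L →ₗ[R] Module.End R L).compr₂ f =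
      (LieModule.toEnd R L' L' : L' →ₗ[R] Module.End R L').compl₁₂ f f :=
    LinearMap.ext_basis B B fun i j => by simpa using h i j
  simpa using LinearMap.congr_fun₂ hbil x y

theorem LinearMap.map_lie_of_basis_of_lt [LinearOrder ι] (B : Module.Basis ι R L)
    (f : L →ₗ[R] L') (h : ∀ i j, i < j → f ⁅B i, B j⁆ = ⁅f (B i), f (B j)⁆) (x y : L) :
    f ⁅x, y⁆ = ⁅f x, f y⁆ := by
  refine f.map_lie_of_basis B (fun i j => ?_) x y
  rcases lt_trichotomy i j with hij | rfl | hji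
  · exact h i j hij
  · simp
  · rw [← lie_skew, map_neg, h j i hji, lie_skew]

end LieBasis

theorem Module.Basis.involutive_of_apply_apply {ι R M : Type*} [CommRing R] [AddCommGroup M]
    [Module R M] (B : Module.Basis ι R M) (f : M →ₗ[R] M) (h : ∀ i, f (f (B i)) = B i) :
    Function.Involutive f :=
  LinearMap.congr_fun (B.ext (f₁ := f ∘ₗ f) (f₂ := LinearMap.id) h)

section Wedge

variable {L : Type} [LieRing L] [LieAlgebra ℝ L]

theorem map_wedge (f : L →ₗ[ℝ] L) (X Y : L) :
    TensorProduct.map f f (wedge L X Y) = wedge L (f X) (f Y) := by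
  simp [wedge]

theorem wedge_neg_neg (X Y : L) : wedge L (-X) (-Y) = wedge L X Y := by
  simp only [wedge, tmul_neg, neg_tmul, neg_neg]

theorem wedge_swap (X Y : L) : wedge L Y X = -wedge L X Y := by
  simp [wedge]

end Wedge

theorem statement8 (L : Type) [LieRing L] [LieAlgebra ℝ L]
    (D H P K C M : L) (B : Module.Basis (Fin 6) ℝ L)
    (hB : ⇑B = ![D, H, P, K, C, M])
    (hDP : ⁅D, P⁆ = -P) (hDK : ⁅D, K⁆ = K) (hKP : ⁅K, P⁆ = M)
    (hDH : ⁅D, H⁆ = (-2 : ℝ) • H) (hDC : ⁅D, C⁆ = (2 : ℝ) • C) (hHC : ⁅H, C⁆ = D)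
    (hKH : ⁅K, H⁆ = P) (hPC : ⁅P, C⁆ = -K) (hKC : ⁅K, C⁆ = 0) (hPH : ⁅P, H⁆ = 0)
    (hM : ∀ X : L, ⁅M, X⁆ = 0)
    (a1 a2 a3 a4 a5 a6 b1 b2 b3 b4 b5 b6 c1 c2 c3 : ℝ) (O : L →ₗ[ℝ] L)
    (hOD : O D = -D) (hOP : O P = -K) (hOK : O K = -P) (hOM : O M = -M)
    (hOH : O H = -C) (hOC : O C = -H) :
    (∀ x y : L, O ⁅x, y⁆ = ⁅O x, O y⁆) ∧ Function.Bijective O ∧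
      TensorProduct.map O O (rGen L D H P K C M a1 a2 a3 a4 a5 a6 b1 b2 b3 b4 b5 b6 c1 c2 c3) =
        rGen L D H P K C M b1 b2 b3 b4 b5 b6 a1 a2 a3 a4 a5 a6 c1 (-c2) (-c3) := by
  have hHP : ⁅H, P⁆ = 0 := by rw [← lie_skew, hPH, neg_zero]
  have hHK : ⁅H, K⁆ = -P := by rw [← lie_skew, hKH]
  have hPK : ⁅P, K⁆ = -M := by rw [← lie_skew, hKP]
  have hCH : ⁅C, H⁆ = -D := by rw [← lie_skew, hHC]
  have hCP : ⁅C, P⁆ = K := by rw [← lie_skew, hPC, neg_neg]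
  have hCK : ⁅C, K⁆ = 0 := by rw [← lie_skew, hKC, neg_zero]
  have hM' : ∀ X : L, ⁅X, M⁆ = 0 := fun X => by rw [← lie_skew, hM, neg_zero]
  have hlie : ∀ x y : L, O ⁅x, y⁆ = ⁅O x, O y⁆ := by
    refine O.map_lie_of_basis_of_lt B fun i j hij => ?_
    fin_cases i <;> fin_cases j <;> first | exact absurd hij (by decide) |
      simp [hB, hDP, hDK, hDH, hDC, hHC, hPC, hKC, hHP, hHK, hPK, hCH, hCP, hCK, hM',
        hOD, hOP, hOK, hOM, hOH, hOC]
  have hinv : Function.Involutive O := B.involutive_of_apply_apply O fun i => by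
    fin_cases i <;> simp [hB, hOD, hOP, hOK, hOM, hOH, hOC]
  refine ⟨hlie, hinv.bijective, ?_⟩
  simp only [rGen, map_add, map_smul, map_wedge, hOD, hOP, hOK, hOM, hOH, hOC, wedge_neg_neg]
  rw [wedge_swap K P, wedge_swap C H]
  module
end

section
/- For all real numbers m, p, k, h, c, d, the product of matrix exponentials exp(m ρ(M)) · exp(p ρ(P)) · exp(k ρ(K)) · exp(h ρ(H)) · exp(c ρ(C)) · exp(d ρ(D)) equals the 4×4 matrix with rows (1, (k-(p+kh)c)e^{-d}, (p+kh)e^{d}, 2m-pk), (0, (1-hc)e^{-d}, h e^{d}, p), (0, -c e^{-d}, e^{d}, -k), (0, 0, 0, 1). -/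
open TensorProduct

/-!
Each of `ρ(M)`, `ρ(P)`, `ρ(K)`, `ρ(H)`, `ρ(C)` squares to zero, so the exponential series of
`t • ρ(X)` stops after its linear term, while `ρ(D) = diag(0, -1, 1, 0)` is diagonal, so
`exp (d • ρ(D)) = diag(1, e^{-d}, e^d, 1)`. The theorem is then a product of six explicit matrices.
-/

open scoped Nat

namespace NormedSpace

variable {𝔸 : Type*} [Ring 𝔸] [Algebra ℚ 𝔸] [TopologicalSpace 𝔸] [IsTopologicalRing 𝔸]

theorem exp_eq_sum_range_of_pow_eq_zero {x : 𝔸} {N : ℕ} (hx : x ^ N = 0) :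
    exp x = ∑ n ∈ Finset.range N, (n !⁻¹ : ℚ) • x ^ n := by
  rw [exp_eq_tsum ℚ]
  refine tsum_eq_sum fun n hn ↦ ?_
  rw [pow_eq_zero_of_le (by simpa using hn) hx, smul_zero]

theorem exp_eq_one_add_of_sq_eq_zero {x : 𝔸} (hx : x ^ 2 = 0) : exp x = 1 + x := by
  simp [exp_eq_sum_range_of_pow_eq_zero hx, Finset.sum_range_succ]

theorem exp_smul_eq_one_add_smul {R : Type*} [Monoid R] [DistribMulAction R 𝔸]
    [IsScalarTower R 𝔸 𝔸] [SMulCommClass R 𝔸 𝔸] {x : 𝔸} (hx : x ^ 2 = 0) (t : R) :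
    exp (t • x) = 1 + t • x :=
  exp_eq_one_add_of_sq_eq_zero (by rw [smul_pow, hx, smul_zero])

end NormedSpace

theorem Matrix.exp_smul_diagonal {n : Type*} [Fintype n] [DecidableEq n] (t : ℝ) (v : n → ℝ) :
    NormedSpace.exp (t • diagonal v) = diagonal fun i ↦ Real.exp (t * v i) := by
  rw [← diagonal_smul, exp_diagonal]
  congr 1
  ext i
  simp [Real.exp_eq_exp_ℝ]

theorem statement19_general (L : Type) [LieRing L] [LieAlgebra ℝ L]
    (D H P K C M : L)
    (rho : L →ₗ[ℝ] Matrix (Fin 4) (Fin 4) ℝ)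
    (hrD : rho D = !![0,0,0,0; 0,-1,0,0; 0,0,1,0; 0,0,0,0])
    (hrH : rho H = !![0,0,0,0; 0,0,1,0; 0,0,0,0; 0,0,0,0])
    (hrP : rho P = !![0,0,1,0; 0,0,0,1; 0,0,0,0; 0,0,0,0])
    (hrK : rho K = !![0,1,0,0; 0,0,0,0; 0,0,0,-1; 0,0,0,0])
    (hrC : rho C = !![0,0,0,0; 0,0,0,0; 0,-1,0,0; 0,0,0,0])
    (hrM : rho M = !![0,0,0,2; 0,0,0,0; 0,0,0,0; 0,0,0,0])
    (m p k h c d : ℝ) :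
    NormedSpace.exp (m • rho M) * NormedSpace.exp (p • rho P) *
      NormedSpace.exp (k • rho K) * NormedSpace.exp (h • rho H) *
      NormedSpace.exp (c • rho C) * NormedSpace.exp (d • rho D) =
    !![1, (k - (p + k*h)*c) * Real.exp (-d), (p + k*h) * Real.exp d, 2*m - p*k;
       0, (1 - h*c) * Real.exp (-d), h * Real.exp d, p;
       0, -(c * Real.exp (-d)), Real.exp d, -k;
       0, 0, 0, 1] := by
  have hM : rho M ^ 2 = 0 := by simp [hrM, sq, ← Matrix.ext_iff, Fin.forall_fin_succ]
  have hP : rho P ^ 2 = 0 := by simp [hrP, sq, ← Matrix.ext_iff, Fin.forall_fin_succ]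
  have hK : rho K ^ 2 = 0 := by simp [hrK, sq, ← Matrix.ext_iff, Fin.forall_fin_succ]
  have hH : rho H ^ 2 = 0 := by simp [hrH, sq, ← Matrix.ext_iff, Fin.forall_fin_succ]
  have hC : rho C ^ 2 = 0 := by simp [hrC, sq, ← Matrix.ext_iff, Fin.forall_fin_succ]
  have hD : rho D = Matrix.diagonal ![0, -1, 1, 0] := by
    rw [hrD]; ext i j; fin_cases i <;> fin_cases j <;> simp
  rw [NormedSpace.exp_smul_eq_one_add_smul hM, NormedSpace.exp_smul_eq_one_add_smul hP,
    NormedSpace.exp_smul_eq_one_add_smul hK, NormedSpace.exp_smul_eq_one_add_smul hH,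
    NormedSpace.exp_smul_eq_one_add_smul hC, hD, Matrix.exp_smul_diagonal, hrM, hrP, hrK, hrH, hrC]
  ext i j
  fin_cases i <;> fin_cases j <;> simp [Matrix.mul_apply, Fin.sum_univ_four] <;> ring

theorem statement19 (L : Type) [LieRing L] [LieAlgebra ℝ L]
    (D H P K C M : L) (B : Module.Basis (Fin 6) ℝ L)
    (hB : ⇑B = ![D, H, P, K, C, M])
    (hDP : ⁅D, P⁆ = -P) (hDK : ⁅D, K⁆ = K) (hKP : ⁅K, P⁆ = M)
    (hDH : ⁅D, H⁆ = (-2 : ℝ) • H) (hDC : ⁅D, C⁆ = (2 : ℝ) • C) (hHC : ⁅H, C⁆ = D)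
    (hKH : ⁅K, H⁆ = P) (hPC : ⁅P, C⁆ = -K) (hKC : ⁅K, C⁆ = 0) (hPH : ⁅P, H⁆ = 0)
    (hM : ∀ X : L, ⁅M, X⁆ = 0)
    (rho : L →ₗ[ℝ] Matrix (Fin 4) (Fin 4) ℝ)
    (hrD : rho D = !![0,0,0,0; 0,-1,0,0; 0,0,1,0; 0,0,0,0])
    (hrH : rho H = !![0,0,0,0; 0,0,1,0; 0,0,0,0; 0,0,0,0])
    (hrP : rho P = !![0,0,1,0; 0,0,0,1; 0,0,0,0; 0,0,0,0])
    (hrK : rho K = !![0,1,0,0; 0,0,0,0; 0,0,0,-1; 0,0,0,0])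
    (hrC : rho C = !![0,0,0,0; 0,0,0,0; 0,-1,0,0; 0,0,0,0])
    (hrM : rho M = !![0,0,0,2; 0,0,0,0; 0,0,0,0; 0,0,0,0])
    (m p k h c d : ℝ) :
    NormedSpace.exp (m • rho M) * NormedSpace.exp (p • rho P) *
      NormedSpace.exp (k • rho K) * NormedSpace.exp (h • rho H) *
      NormedSpace.exp (c • rho C) * NormedSpace.exp (d • rho D) =
    !![1, (k - (p + k*h)*c) * Real.exp (-d), (p + k*h) * Real.exp d, 2*m - p*k;
       0, (1 - h*c) * Real.exp (-d), h * Real.exp d, p;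
       0, -(c * Real.exp (-d)), Real.exp d, -k;
       0, 0, 0, 1] :=
  statement19_general L D H P K C M rho hrD hrH hrP hrK hrC hrM m p k h c d
end
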